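/- arXiv:2003.08900 — 11 statements merged into one kernel-verified Lean document; each statement's English description precedes it below -/
import Mathlib

section
/- Let N > M ≥ 1 be coprime integers with N + M odd, let a, b ∈ ℂ, and let τ : ℤ → ℂ satisfy τ_m ≠ 0 for all m. Define u_m = (τ_m τ_{m+N+1})/(τ_{m+1} τ_{m+N}). Then τ satisfies the bilinear T-system τ_{m+2N+M} τ_m = a τ_{m+2N} τ_{m+M} + b τ_{m+N+M} τ_{m+N} for all m ∈ ℤ if and only if u satisfies the U-system u_m u_{m+1} ⋯ u_{m+N+M−1} = b + a u_{m+M} u_{m+M+1} ⋯ u_{m+N−1} for all m ∈ ℤ. -/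
/-! The products of `u` telescope: `u_m ⋯ u_{m+k-1} = τ_m τ_{m+k+N} / (τ_{m+k} τ_{m+N})`.
Hence both sides of the U-system at `m` are fractions with the common nonzero denominator
`τ_{m+N} τ_{m+N+M}`, and clearing it turns the U-system at `m` into the T-system at `m`. -/

variable {K : Type*} [Field K]

theorem prod_range_cross_ratio {N : ℤ} {τ u : ℤ → K} (hτ : ∀ m, τ m ≠ 0)
    (hu : ∀ m, u m = τ m * τ (m + N + 1) / (τ (m + 1) * τ (m + N))) (m : ℤ) (k : ℕ) :
    ∏ i ∈ Finset.range k, u (m + i) = τ m * τ (m + k + N) / (τ (m + k) * τ (m + N)) := by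
  induction k with
  | zero => simp [mul_ne_zero (hτ m) (hτ (m + N))]
  | succ k ih =>
    rw [Finset.prod_range_succ, ih, hu]
    push_cast
    rw [← add_assoc, div_mul_div_comm, div_eq_div_iff
      (mul_ne_zero (mul_ne_zero (hτ _) (hτ _)) (mul_ne_zero (hτ _) (hτ _)))
      (mul_ne_zero (hτ _) (hτ _))]
    ring_nf

theorem uSystem_at_iff_tSystem_at {N M : ℕ} (hMN : M ≤ N) (a b : K) {τ u : ℤ → K}
    (hτ : ∀ m, τ m ≠ 0) (hu : ∀ m, u m = τ m * τ (m + N + 1) / (τ (m + 1) * τ (m + N)))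
    (m : ℤ) :
    ∏ i ∈ Finset.range (N + M), u (m + i) = b + a * ∏ i ∈ Finset.range (N - M), u (m + M + i) ↔
      τ (m + 2 * N + M) * τ m =
        a * (τ (m + 2 * N) * τ (m + M)) + b * (τ (m + N + M) * τ (m + N)) := by
  rw [prod_range_cross_ratio hτ hu, prod_range_cross_ratio hτ hu]
  push_cast [hMN]
  have hD := mul_ne_zero (hτ (m + N)) (hτ (m + N + M))
  rw [show m + M + (N - M : ℤ) = m + N by ring, show m + N + N = m + 2 * N by ring,
    show m + (N + M : ℤ) + N = m + 2 * N + M by ring, show m + M + (N : ℤ) = m + N + M by ring,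
    show m + (N + M : ℤ) = m + N + M by ring,
    mul_comm (τ (m + N + M)), mul_div_assoc', add_div' _ _ _ hD, div_left_inj' hD]
  constructor <;> intro h <;> linear_combination h

theorem tSystem_iff_uSystem_odd_first_general
    (N M : ℕ) (hMN : M < N) (a b : ℂ)
    (τ : ℤ → ℂ) (hτ : ∀ m : ℤ, τ m ≠ 0)
    (u : ℤ → ℂ)
    (hu : ∀ m : ℤ, u m = τ m * τ (m + N + 1) / (τ (m + 1) * τ (m + N))) :
    (∀ m : ℤ, τ (m + 2 * N + M) * τ m =
        a * (τ (m + 2 * N) * τ (m + M)) + b * (τ (m + N + M) * τ (m + N))) ↔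
    (∀ m : ℤ, ∏ i ∈ Finset.range (N + M), u (m + i) =
        b + a * ∏ i ∈ Finset.range (N - M), u (m + M + i)) :=
  forall_congr' fun m => (uSystem_at_iff_tSystem_at hMN.le a b hτ hu m).symm

/-- For coprime `N > M ≥ 1` with `N + M` odd, a nowhere-vanishing
sequence `τ : ℤ → ℂ` satisfies the bilinear T-system
`τ_{m+2N+M} τ_m = a τ_{m+2N} τ_{m+M} + b τ_{m+N+M} τ_{m+N}`
iff `u_m = (τ_m τ_{m+N+1})/(τ_{m+1} τ_{m+N})` satisfies the U-system
`u_m u_{m+1} ⋯ u_{m+N+M−1} = b + a u_{m+M} ⋯ u_{m+N−1}`. -/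
theorem tSystem_iff_uSystem_odd_first
    (N M : ℕ) (hM : 1 ≤ M) (hMN : M < N) (hcop : Nat.Coprime N M)
    (hodd : Odd (N + M)) (a b : ℂ)
    (τ : ℤ → ℂ) (hτ : ∀ m : ℤ, τ m ≠ 0)
    (u : ℤ → ℂ)
    (hu : ∀ m : ℤ, u m = τ m * τ (m + N + 1) / (τ (m + 1) * τ (m + N))) :
    (∀ m : ℤ, τ (m + 2 * N + M) * τ m =
        a * (τ (m + 2 * N) * τ (m + M)) + b * (τ (m + N + M) * τ (m + N))) ↔
    (∀ m : ℤ, ∏ i ∈ Finset.range (N + M), u (m + i) =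
        b + a * ∏ i ∈ Finset.range (N - M), u (m + M + i)) :=
  tSystem_iff_uSystem_odd_first_general N M hMN a b τ hτ u hu
end

section
/- Let N > M ≥ 1 be coprime integers with N + M even, let a, b ∈ ℂ, and let τ : ℤ → ℂ satisfy τ_m ≠ 0 for all m. Define u_m = (τ_m τ_{m+N+2})/(τ_{m+2} τ_{m+N}). Then τ satisfies the bilinear T-system τ_{m+2N+M} τ_m = a τ_{m+2N} τ_{m+M} + b τ_{m+N+M} τ_{m+N} for all m ∈ ℤ if and only if u satisfies the U-system u_m u_{m+2} ⋯ u_{m+N+M−2} = b + a u_{m+M} u_{m+M+2} ⋯ u_{m+N−2} for all m ∈ ℤ, where both products run over indices increasing in steps of 2 (the left-hand product has (N+M)/2 factors and the right-hand product has (N−M)/2 factors). -/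
private lemma div_iff_helper (X Y c d a b : ℂ) (hc : c ≠ 0) (hd : d ≠ 0) :
    X / (c * d) = b + a * (Y / (d * c)) ↔ X = b * (c * d) + a * Y := by
  rw [mul_div_assoc' a, add_div' _ _ _ (mul_ne_zero hd hc),
    div_eq_div_iff (mul_ne_zero hc hd) (mul_ne_zero hd hc)]
  constructor <;> intro h
  · exact mul_right_cancel₀ (mul_ne_zero hd hc) (by linear_combination h)
  · linear_combination (d * c) * h

/-- For coprime `N > M ≥ 1` with `N + M` even, a nowhere-vanishing
sequence `τ : ℤ → ℂ` satisfies the bilinear T-system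
`τ_{m+2N+M} τ_m = a τ_{m+2N} τ_{m+M} + b τ_{m+N+M} τ_{m+N}`
iff `u_m = (τ_m τ_{m+N+2})/(τ_{m+2} τ_{m+N})` satisfies the U-system
`u_m u_{m+2} ⋯ u_{m+N+M−2} = b + a u_{m+M} u_{m+M+2} ⋯ u_{m+N−2}`,
where products run in steps of 2 (with `(N+M)/2` resp. `(N−M)/2` factors). -/
theorem tSystem_iff_uSystem_even_first
    (N M : ℕ) (hM : 1 ≤ M) (hMN : M < N) (hcop : Nat.Coprime N M)
    (heven : Even (N + M)) (a b : ℂ)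
    (τ : ℤ → ℂ) (hτ : ∀ m : ℤ, τ m ≠ 0)
    (u : ℤ → ℂ)
    (hu : ∀ m : ℤ, u m = τ m * τ (m + N + 2) / (τ (m + 2) * τ (m + N))) :
    (∀ m : ℤ, τ (m + 2 * N + M) * τ m =
        a * (τ (m + 2 * N) * τ (m + M)) + b * (τ (m + N + M) * τ (m + N))) ↔
    (∀ m : ℤ, ∏ i ∈ Finset.range ((N + M) / 2), u (m + 2 * i) =
        b + a * ∏ i ∈ Finset.range ((N - M) / 2), u (m + M + 2 * i)) := by
  have produ : ∀ (m : ℤ) (K : ℕ),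
      ∏ i ∈ Finset.range K, u (m + 2 * i) =
        τ m * τ (m + N + 2 * K) / (τ (m + 2 * K) * τ (m + N)) := by
    intro m K
    induction K with
    | zero => simp [div_self, mul_ne_zero (hτ _) (hτ _)]
    | succ K ih =>
      rw [Finset.prod_range_succ, ih, hu]
      push_cast
      field_simp [hτ]
      ring
  obtain ⟨k, hk⟩ := heven
  have key : ∀ m : ℤ,
      (∏ i ∈ Finset.range ((N + M) / 2), u (m + 2 * i) =
        b + a * ∏ i ∈ Finset.range ((N - M) / 2), u (m + M + 2 * i)) ↔
      (τ m * τ (m + 2 * N + M) = b * (τ (m + N + M) * τ (m + N)) +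
        a * (τ (m + M) * τ (m + 2 * N))) := by
    intro m
    rw [produ, produ]
    have e1 : m + ↑N + 2 * ((N + M : ℕ) / 2 : ℕ) = m + 2 * N + M := by push_cast; omega
    have e2 : m + 2 * ((N + M : ℕ) / 2 : ℕ) = m + N + M := by push_cast; omega
    have e3 : (m + M) + ↑N + 2 * ((N - M : ℕ) / 2 : ℕ) = m + 2 * N := by push_cast; omega
    have e4 : (m + M) + 2 * ((N - M : ℕ) / 2 : ℕ) = m + N := by push_cast; omega
    have e5 : (m + M) + (N : ℤ) = m + N + M := by ring
    rw [e1, e2, e3, e4, e5]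
    exact div_iff_helper _ _ _ _ _ _ (hτ _) (hτ _)
  constructor
  · intro hT m
    rw [key m]
    linear_combination hT m
  · intro hU m
    have := (key m).mp (hU m)
    linear_combination this
end

section
/- Let N > M ≥ 1 be coprime integers with N + M even, let a, b ∈ ℂ, and let τ : ℤ → ℂ satisfy τ_m ≠ 0 for all m. Define u_m = (τ_m τ_{m+M+2})/(τ_{m+2} τ_{m+M}). Then τ satisfies the bilinear T-system τ_{m+2M+N} τ_m = a τ_{m+2M} τ_{m+N} + b τ_{m+N+M} τ_{m+M} for all m ∈ ℤ if and only if u satisfies the U-system u_m u_{m+2} ⋯ u_{m+N+M−2} = (b u_{m+M} u_{m+M+2} ⋯ u_{m+N−2} + a)/(u_{m+M} u_{m+M+2} ⋯ u_{m+N−2}) for all m ∈ ℤ, where both products run over indices increasing in steps of 2. -/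
/-! Writing `u` as a ratio of `τ`, the product of `u` over an arithmetic progression of step 2
telescopes to a cross-ratio of four values of `τ`. Both sides of the U-system thus become
cross-ratios, and clearing the (nonzero) denominators turns the U-system at `m` into the
T-system at `m`. -/

open Finset

section Telescoping

variable {K : Type*} [Field K] {τ u : ℤ → K} {d s : ℤ}

theorem prod_range_eq_of_eq_ratio (hτ : ∀ m, τ m ≠ 0)
    (hu : ∀ m, u m = τ m * τ (m + s + d) / (τ (m + d) * τ (m + s))) (k : ℕ) (m : ℤ) :
    ∏ i ∈ range k, u (m + d * i) = τ m * τ (m + s + d * k) / (τ (m + d * k) * τ (m + s)) := by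
  induction k with
  | zero => simp [hτ]
  | succ k ih =>
    rw [prod_range_succ, ih, hu]
    push_cast
    rw [show m + d * k + s = m + s + d * k by ring, show m + d * (k + 1) = m + d * k + d by ring,
      show m + s + d * (k + 1) = m + s + d * k + d by ring]
    field_simp [hτ]

end Telescoping

theorem mul_eq_add_iff_div_eq_add_div {K : Type*} [Field K] {a b x₀ x₁ x₂ x₃ x₄ x₅ : K}
    (h₁ : x₁ ≠ 0) (h₂ : x₂ ≠ 0) (h₃ : x₃ ≠ 0) (h₄ : x₄ ≠ 0) :
    x₅ * x₀ = a * (x₂ * x₃) + b * (x₄ * x₁) ↔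
      x₀ * x₅ / (x₄ * x₁) = (b * (x₁ * x₄ / (x₃ * x₂)) + a) / (x₁ * x₄ / (x₃ * x₂)) := by
  field_simp
  constructor <;> intro h <;> linear_combination h

theorem tSystem_iff_uSystem_even_second_general
    (N M : ℕ) (hMN : M < N)
    (heven : Even (N + M)) (a b : ℂ)
    (τ : ℤ → ℂ) (hτ : ∀ m : ℤ, τ m ≠ 0)
    (u : ℤ → ℂ)
    (hu : ∀ m : ℤ, u m = τ m * τ (m + M + 2) / (τ (m + 2) * τ (m + M))) :
    (∀ m : ℤ, τ (m + 2 * M + N) * τ m =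
        a * (τ (m + 2 * M) * τ (m + N)) + b * (τ (m + N + M) * τ (m + M))) ↔
    (∀ m : ℤ, ∏ i ∈ Finset.range ((N + M) / 2), u (m + 2 * i) =
        (b * ∏ i ∈ Finset.range ((N - M) / 2), u (m + M + 2 * i) + a) /
          ∏ i ∈ Finset.range ((N - M) / 2), u (m + M + 2 * i)) := by
  have hsum : 2 * (((N + M) / 2 : ℕ) : ℤ) = N + M := by obtain ⟨t, ht⟩ := heven; omega
  have hdiff : 2 * (((N - M) / 2 : ℕ) : ℤ) = N - M := by obtain ⟨t, ht⟩ := heven; omega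
  refine forall_congr' fun m => ?_
  rw [prod_range_eq_of_eq_ratio hτ hu, prod_range_eq_of_eq_ratio hτ hu, hsum, hdiff,
    show m + M + (N + M) = m + 2 * M + N by ring, show m + (N + M : ℤ) = m + N + M by ring,
    show m + M + M + (N - M : ℤ) = m + N + M by ring, show m + M + (N - M : ℤ) = m + N by ring,
    show m + M + (M : ℤ) = m + 2 * M by ring]
  exact mul_eq_add_iff_div_eq_add_div (hτ _) (hτ _) (hτ _) (hτ _)

/-- For coprime `N > M ≥ 1` with `N + M` even, a nowhere-vanishing
sequence `τ : ℤ → ℂ` satisfies the bilinear T-system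
`τ_{m+2M+N} τ_m = a τ_{m+2M} τ_{m+N} + b τ_{m+N+M} τ_{m+M}`
iff `u_m = (τ_m τ_{m+M+2})/(τ_{m+2} τ_{m+M})` satisfies the U-system
`u_m u_{m+2} ⋯ u_{m+N+M−2} = (b u_{m+M} u_{m+M+2} ⋯ u_{m+N−2} + a)/(u_{m+M} ⋯ u_{m+N−2})`,
where products run in steps of 2. -/
theorem tSystem_iff_uSystem_even_second
    (N M : ℕ) (hM : 1 ≤ M) (hMN : M < N) (hcop : Nat.Coprime N M)
    (heven : Even (N + M)) (a b : ℂ)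
    (τ : ℤ → ℂ) (hτ : ∀ m : ℤ, τ m ≠ 0)
    (u : ℤ → ℂ)
    (hu : ∀ m : ℤ, u m = τ m * τ (m + M + 2) / (τ (m + 2) * τ (m + M))) :
    (∀ m : ℤ, τ (m + 2 * M + N) * τ m =
        a * (τ (m + 2 * M) * τ (m + N)) + b * (τ (m + N + M) * τ (m + M))) ↔
    (∀ m : ℤ, ∏ i ∈ Finset.range ((N + M) / 2), u (m + 2 * i) =
        (b * ∏ i ∈ Finset.range ((N - M) / 2), u (m + M + 2 * i) + a) /
          ∏ i ∈ Finset.range ((N - M) / 2), u (m + M + 2 * i)) :=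
  tSystem_iff_uSystem_even_second_general N M hMN heven a b τ hτ u hu
end

section
/- Let N > M ≥ 1 be coprime integers, α ∈ ℂ, let τ : ℤ → ℂ satisfy τ_m ≠ 0 for all m, and let β : ℤ → ℂ satisfy β_{m+M} = β_m for all m. If τ satisfies the bilinear equation τ_{m+2N+M} τ_m = β_m τ_{m+N+M} τ_{m+N} − α τ_{m+2N} τ_{m+M} for all m ∈ ℤ, then the sequence v_m := (τ_m τ_{m+N+M})/(τ_{m+M} τ_{m+N}) satisfies the (N,M) travelling-wave reduction of the lattice KdV equation, v_{m+N+M} − v_m = α(1/v_{m+N} − 1/v_{m+M}), for all m ∈ ℤ. -/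
/-!
Dividing the bilinear equation at `m` by suitable products of `τ`'s gives two identities for
`v_m = τ_m τ_{m+N+M} / (τ_{m+M} τ_{m+N})`:
`v_m + α / v_{m+N} = β_m τ_{m+N+M}² / (τ_{m+M} τ_{m+2N+M})` and
`v_{m+N} + α / v_m = β_m τ_{m+N}² / (τ_m τ_{m+2N})`.
The second one at `m + M` has the same right-hand side as the first one at `m`, because `β` has
period `M`; subtracting yields the equation.
-/

namespace LatticeKdV

variable {K : Type*} [Field K]

def tauRatio (p q : ℤ) (τ : ℤ → K) (m : ℤ) : K :=
  τ m * τ (m + p + q) / (τ (m + q) * τ (m + p))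

variable {p q : ℤ} {α : K} {τ : ℤ → K}

theorem tauRatio_add_inv_tauRatio_add (hτ : ∀ m, τ m ≠ 0) {β : K} {m : ℤ}
    (hbil : τ (m + 2 * p + q) * τ m =
      β * (τ (m + p + q) * τ (m + p)) - α * (τ (m + 2 * p) * τ (m + q))) :
    tauRatio p q τ m + α / tauRatio p q τ (m + p) =
      β * τ (m + p + q) ^ 2 / (τ (m + q) * τ (m + 2 * p + q)) := by
  have hpp : m + p + p = m + 2 * p := by ring
  simp only [tauRatio, hpp]
  have := hτ m; have := hτ (m + q); have := hτ (m + p); have := hτ (m + p + q)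
  have := hτ (m + 2 * p); have := hτ (m + 2 * p + q)
  field_simp
  linear_combination hbil

theorem tauRatio_add_add_inv_tauRatio (hτ : ∀ m, τ m ≠ 0) {β : K} {m : ℤ}
    (hbil : τ (m + 2 * p + q) * τ m =
      β * (τ (m + p + q) * τ (m + p)) - α * (τ (m + 2 * p) * τ (m + q))) :
    tauRatio p q τ (m + p) + α / tauRatio p q τ m =
      β * τ (m + p) ^ 2 / (τ m * τ (m + 2 * p)) := by
  have hpp : m + p + p = m + 2 * p := by ring
  simp only [tauRatio, hpp]
  have := hτ m; have := hτ (m + q); have := hτ (m + p); have := hτ (m + p + q)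
  have := hτ (m + 2 * p); have := hτ (m + 2 * p + q)
  field_simp
  linear_combination hbil

theorem tauRatio_kdvReduction (hτ : ∀ m, τ m ≠ 0) {β : ℤ → K} (hβ : ∀ m, β (m + q) = β m)
    (hbil : ∀ m, τ (m + 2 * p + q) * τ m =
      β m * (τ (m + p + q) * τ (m + p)) - α * (τ (m + 2 * p) * τ (m + q)))
    (m : ℤ) :
    tauRatio p q τ (m + p + q) - tauRatio p q τ m =
      α * (1 / tauRatio p q τ (m + p) - 1 / tauRatio p q τ (m + q)) := by
  have hbil' := hbil (m + q)
  rw [hβ] at hbil'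
  have hA := tauRatio_add_inv_tauRatio_add hτ (hbil m)
  have hB := tauRatio_add_add_inv_tauRatio hτ hbil'
  have hqp : m + q + p = m + p + q := by ring
  have hq2p : m + q + 2 * p = m + 2 * p + q := by ring
  rw [hqp, hq2p, ← hA] at hB
  linear_combination hB

end LatticeKdV

theorem bilinear_first_implies_kdvReduction_general
    (N M : ℕ) (α : ℂ)
    (τ : ℤ → ℂ) (hτ : ∀ m : ℤ, τ m ≠ 0)
    (β : ℤ → ℂ) (hβ : ∀ m : ℤ, β (m + M) = β m)
    (hbil : ∀ m : ℤ, τ (m + 2 * N + M) * τ m =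
        β m * (τ (m + N + M) * τ (m + N)) - α * (τ (m + 2 * N) * τ (m + M)))
    (v : ℤ → ℂ)
    (hv : ∀ m : ℤ, v m = τ m * τ (m + N + M) / (τ (m + M) * τ (m + N))) :
    ∀ m : ℤ, v (m + N + M) - v m = α * (1 / v (m + N) - 1 / v (m + M)) := by
  obtain rfl : v = LatticeKdV.tauRatio N M τ := funext hv
  exact LatticeKdV.tauRatio_kdvReduction hτ hβ hbil

/-- If a nowhere-vanishing `τ : ℤ → ℂ` satisfies the bilinear equation
`τ_{m+2N+M} τ_m = β_m τ_{m+N+M} τ_{m+N} − α τ_{m+2N} τ_{m+M}` with `β` periodic of period `M`,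
then `v_m = (τ_m τ_{m+N+M})/(τ_{m+M} τ_{m+N})` satisfies the `(N,M)` travelling-wave
reduction of the lattice KdV equation. -/
theorem bilinear_first_implies_kdvReduction
    (N M : ℕ) (hM : 1 ≤ M) (hMN : M < N) (hcop : Nat.Coprime N M) (α : ℂ)
    (τ : ℤ → ℂ) (hτ : ∀ m : ℤ, τ m ≠ 0)
    (β : ℤ → ℂ) (hβ : ∀ m : ℤ, β (m + M) = β m)
    (hbil : ∀ m : ℤ, τ (m + 2 * N + M) * τ m =
        β m * (τ (m + N + M) * τ (m + N)) - α * (τ (m + 2 * N) * τ (m + M)))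
    (v : ℤ → ℂ)
    (hv : ∀ m : ℤ, v m = τ m * τ (m + N + M) / (τ (m + M) * τ (m + N))) :
    ∀ m : ℤ, v (m + N + M) - v m = α * (1 / v (m + N) - 1 / v (m + M)) :=
  bilinear_first_implies_kdvReduction_general N M α τ hτ β hβ hbil v hv
end

section
/- Let N > M ≥ 1 be coprime integers, α ∈ ℂ, and let τ : ℤ → ℂ satisfy τ_m ≠ 0 for all m. Suppose the sequence v_m := (τ_m τ_{m+N+M})/(τ_{m+M} τ_{m+N}) satisfies the (N,M) travelling-wave reduction of the lattice KdV equation, v_{m+N+M} − v_m = α(1/v_{m+N} − 1/v_{m+M}), for all m ∈ ℤ. Then there exist sequences β, β' : ℤ → ℂ with β_{m+M} = β_m and β'_{m+N} = β'_m for all m, such that τ satisfies both bilinear equations τ_{m+2N+M} τ_m = β_m τ_{m+N+M} τ_{m+N} − α τ_{m+2N} τ_{m+M} and τ_{m+2M+N} τ_m = β'_m τ_{m+N+M} τ_{m+M} + α τ_{m+2M} τ_{m+N} for all m ∈ ℤ. -/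
/-!
Written in terms of `τ`, the lattice KdV reduction becomes, after clearing denominators, a
trilinear identity in `τ`. That identity says exactly that the coefficient `β_m` obtained by
solving the first bilinear equation for `β_m` is unchanged under `m ↦ m + M`. The equation is
invariant under `(N, M, α) ↦ (M, N, -α)`, which turns the first bilinear equation into the
second one, so `β'` is the same coefficient for the swapped data.
-/

section
variable {K : Type*} [Field K]

def IsLatticeKdVReduction (α : K) (a b : ℤ) (v : ℤ → K) : Prop :=
  ∀ m, v (m + a + b) - v m = α * (1 / v (m + a) - 1 / v (m + b))

def kdvBilinearCoeff (α : K) (τ : ℤ → K) (a b m : ℤ) : K :=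
  (τ (m + 2 * a + b) * τ m + α * (τ (m + 2 * a) * τ (m + b))) / (τ (m + a + b) * τ (m + a))

variable {α : K} {τ v : ℤ → K} {a b : ℤ}

theorem IsLatticeKdVReduction.swap (h : IsLatticeKdVReduction α a b v) :
    IsLatticeKdVReduction (-α) b a v := fun m => by
  rw [add_right_comm]
  linear_combination h m

theorem IsLatticeKdVReduction.trilinear (hkdv : IsLatticeKdVReduction α a b v)
    (hτ : ∀ m, τ m ≠ 0) (hv : ∀ m, v m = τ m * τ (m + a + b) / (τ (m + b) * τ (m + a)))
    (m : ℤ) :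
    τ (m + 2 * a + 2 * b) * τ (m + b) * τ (m + a) - τ (m + a + 2 * b) * τ (m + 2 * a + b) * τ m =
      α * (τ (m + a + 2 * b) * τ (m + b) * τ (m + 2 * a) -
        τ (m + 2 * a + b) * τ (m + a) * τ (m + 2 * b)) := by
  have hv_ab : v (m + a + b) =
      τ (m + a + b) * τ (m + 2 * a + 2 * b) / (τ (m + a + 2 * b) * τ (m + 2 * a + b)) := by
    rw [hv]; ring_nf
  have hv_a : v (m + a) = τ (m + a) * τ (m + 2 * a + b) / (τ (m + a + b) * τ (m + 2 * a)) := by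
    rw [hv]; ring_nf
  have hv_b : v (m + b) = τ (m + b) * τ (m + a + 2 * b) / (τ (m + 2 * b) * τ (m + a + b)) := by
    rw [hv]; ring_nf
  have h := hkdv m
  rw [hv m, hv_ab, hv_a, hv_b] at h
  field_simp [hτ] at h
  linear_combination h

theorem IsLatticeKdVReduction.periodic_kdvBilinearCoeff (hkdv : IsLatticeKdVReduction α a b v)
    (hτ : ∀ m, τ m ≠ 0) (hv : ∀ m, v m = τ m * τ (m + a + b) / (τ (m + b) * τ (m + a))) :
    Function.Periodic (kdvBilinearCoeff α τ a b) b := by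
  intro m
  have hshift : kdvBilinearCoeff α τ a b (m + b) =
      (τ (m + 2 * a + 2 * b) * τ (m + b) + α * (τ (m + 2 * a + b) * τ (m + 2 * b))) /
        (τ (m + a + 2 * b) * τ (m + a + b)) := by
    rw [kdvBilinearCoeff]; ring_nf
  rw [hshift, kdvBilinearCoeff,
    div_eq_div_iff (mul_ne_zero (hτ _) (hτ _)) (mul_ne_zero (hτ _) (hτ _))]
  linear_combination τ (m + a + b) * hkdv.trilinear hτ hv m

theorem mul_eq_kdvBilinearCoeff_mul_sub (hτ : ∀ m, τ m ≠ 0) (m : ℤ) :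
    τ (m + 2 * a + b) * τ m =
      kdvBilinearCoeff α τ a b m * (τ (m + a + b) * τ (m + a)) -
        α * (τ (m + 2 * a) * τ (m + b)) := by
  rw [kdvBilinearCoeff, div_mul_cancel₀ _ (mul_ne_zero (hτ _) (hτ _))]
  ring

end

theorem kdvReduction_implies_bilinear_general
    (N M : ℕ) (α : ℂ)
    (τ : ℤ → ℂ) (hτ : ∀ m : ℤ, τ m ≠ 0)
    (v : ℤ → ℂ)
    (hv : ∀ m : ℤ, v m = τ m * τ (m + N + M) / (τ (m + M) * τ (m + N)))
    (hkdv : ∀ m : ℤ, v (m + N + M) - v m = α * (1 / v (m + N) - 1 / v (m + M))) :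
    ∃ β β' : ℤ → ℂ,
      (∀ m : ℤ, β (m + M) = β m) ∧ (∀ m : ℤ, β' (m + N) = β' m) ∧
      (∀ m : ℤ, τ (m + 2 * N + M) * τ m =
          β m * (τ (m + N + M) * τ (m + N)) - α * (τ (m + 2 * N) * τ (m + M))) ∧
      (∀ m : ℤ, τ (m + 2 * M + N) * τ m =
          β' m * (τ (m + N + M) * τ (m + M)) + α * (τ (m + 2 * M) * τ (m + N))) := by
  have hkdv : IsLatticeKdVReduction α N M v := hkdv
  have hv_swap : ∀ m : ℤ, v m = τ m * τ (m + M + N) / (τ (m + N) * τ (m + M)) := fun m => by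
    rw [hv, add_right_comm m (M : ℤ), mul_comm (τ (m + N))]
  refine ⟨kdvBilinearCoeff α τ N M, kdvBilinearCoeff (-α) τ M N,
    hkdv.periodic_kdvBilinearCoeff hτ hv, hkdv.swap.periodic_kdvBilinearCoeff hτ hv_swap,
    mul_eq_kdvBilinearCoeff_mul_sub hτ, fun m => ?_⟩
  have h := mul_eq_kdvBilinearCoeff_mul_sub (α := -α) (a := M) (b := N) hτ m
  rw [add_right_comm m (M : ℤ) N] at h
  linear_combination h

/-- If `v_m = (τ_m τ_{m+N+M})/(τ_{m+M} τ_{m+N})` satisfies the `(N,M)`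
travelling-wave reduction of the lattice KdV equation, then there exist sequences `β`
(periodic with period `M`) and `β'` (periodic with period `N`) such that `τ` satisfies
both bilinear equations
`τ_{m+2N+M} τ_m = β_m τ_{m+N+M} τ_{m+N} − α τ_{m+2N} τ_{m+M}` and
`τ_{m+2M+N} τ_m = β'_m τ_{m+N+M} τ_{m+M} + α τ_{m+2M} τ_{m+N}`. -/
theorem kdvReduction_implies_bilinear
    (N M : ℕ) (hM : 1 ≤ M) (hMN : M < N) (hcop : Nat.Coprime N M) (α : ℂ)
    (τ : ℤ → ℂ) (hτ : ∀ m : ℤ, τ m ≠ 0)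
    (v : ℤ → ℂ)
    (hv : ∀ m : ℤ, v m = τ m * τ (m + N + M) / (τ (m + M) * τ (m + N)))
    (hkdv : ∀ m : ℤ, v (m + N + M) - v m = α * (1 / v (m + N) - 1 / v (m + M))) :
    ∃ β β' : ℤ → ℂ,
      (∀ m : ℤ, β (m + M) = β m) ∧ (∀ m : ℤ, β' (m + N) = β' m) ∧
      (∀ m : ℤ, τ (m + 2 * N + M) * τ m =
          β m * (τ (m + N + M) * τ (m + N)) - α * (τ (m + 2 * N) * τ (m + M))) ∧
      (∀ m : ℤ, τ (m + 2 * M + N) * τ m =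
          β' m * (τ (m + N + M) * τ (m + M)) + α * (τ (m + 2 * M) * τ (m + N))) :=
  kdvReduction_implies_bilinear_general N M α τ hτ v hv hkdv
end

section
/- Let N > M ≥ 1 be coprime integers, α ∈ ℂ, and let v : ℤ → ℂ satisfy v_m ≠ 0 for all m. Then v satisfies the (N,M) travelling-wave reduction of the lattice KdV equation, v_{m+N+M} − v_m = α(1/v_{m+N} − 1/v_{m+M}) for all m ∈ ℤ, if and only if for every m ∈ ℤ and every λ ∈ ℂ the 2×2 matrix identity 𝐋(v_m, v_{m+M}) 𝐌(v_{m+N}) = 𝐌(v_{m+N+M}) 𝐋(v_{m+N}, v_{m+N+M}) holds. -/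
/-- The Lax matrix `𝐋(V,W) = [[V − α/W, λ],[1, 0]]`. -/
noncomputable def Lmat (α lam V W : ℂ) : Matrix (Fin 2) (Fin 2) ℂ :=
  !![V - α / W, lam; 1, 0]

/-- The Lax matrix `𝐌(V) = [[V, λ],[1, α/V]]`. -/
noncomputable def Mmat (α lam V : ℂ) : Matrix (Fin 2) (Fin 2) ℂ :=
  !![V, lam; 1, α / V]

/-- A nowhere-vanishing `v : ℤ → ℂ` satisfies the `(N,M)` travelling-wave
reduction of the lattice KdV equation iff for every `m` and every spectral parameter `λ`
the zero-curvature identity `𝐋(v_m, v_{m+M}) 𝐌(v_{m+N}) = 𝐌(v_{m+N+M}) 𝐋(v_{m+N}, v_{m+N+M})`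
holds. -/
theorem kdvReduction_iff_laxPair
    (N M : ℕ) (hM : 1 ≤ M) (hMN : M < N) (hcop : Nat.Coprime N M) (α : ℂ)
    (v : ℤ → ℂ) (hv : ∀ m : ℤ, v m ≠ 0) :
    (∀ m : ℤ, v (m + N + M) - v m = α * (1 / v (m + N) - 1 / v (m + M))) ↔
    (∀ (m : ℤ) (lam : ℂ),
      Lmat α lam (v m) (v (m + M)) * Mmat α lam (v (m + N)) =
        Mmat α lam (v (m + N + M)) * Lmat α lam (v (m + N)) (v (m + N + M))) := by
  constructor
  · intro h m lam
    have hm := h m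
    have h1 : v (m + M) ≠ 0 := hv _
    have h2 : v (m + N) ≠ 0 := hv _
    have h3 : v (m + N + M) ≠ 0 := hv _
    have key : v (m + N + M) * (v (m + N) * v (m + M)) =
        v m * (v (m + N) * v (m + M)) + α * v (m + M) - α * v (m + N) := by
      field_simp at hm
      linear_combination hm
    ext i j
    fin_cases i <;> fin_cases j <;>
      simp [Lmat, Mmat, Matrix.mul_apply, Fin.sum_univ_succ] <;>
      field_simp
    · linear_combination -key
    · linear_combination -lam * key
  · intro h m
    have hm := congrFun (congrFun (h m 1) 0) 1
    have h1 : v (m + M) ≠ 0 := hv _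
    have h2 : v (m + N) ≠ 0 := hv _
    simp [Lmat, Mmat, Matrix.mul_apply, Fin.sum_univ_succ] at hm
    field_simp at hm ⊢
    first
      | linear_combination hm
      | linear_combination -hm
end

section
/- Let N > M ≥ 1 be coprime integers with N + M odd, α ∈ ℂ, and let u : ℤ → ℂ satisfy u_m ≠ 0 for all m. Define v_m = u_m u_{m+1} ⋯ u_{m+M−1}. Then v satisfies the (N,M) travelling-wave reduction of the lattice KdV equation, v_{m+N+M} − v_m = α(1/v_{m+N} − 1/v_{m+M}) for all m ∈ ℤ, if and only if there exists β : ℤ → ℂ with β_{m+M} = β_m for all m such that u satisfies u_m u_{m+1} ⋯ u_{m+N+M−1} = β_m − α u_{m+M} u_{m+M+1} ⋯ u_{m+N−1} for all m ∈ ℤ. -/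
/-- For coprime `N > M ≥ 1` with `N + M` odd and a nowhere-vanishing
`u : ℤ → ℂ`, the sequence `v_m = u_m u_{m+1} ⋯ u_{m+M−1}` satisfies the `(N,M)`
travelling-wave reduction of the lattice KdV equation iff there is an `M`-periodic
sequence `β` such that `u_m u_{m+1} ⋯ u_{m+N+M−1} = β_m − α u_{m+M} ⋯ u_{m+N−1}` for
all `m`. -/
theorem kdvReduction_iff_uSystem_first
    (N M : ℕ) (hM : 1 ≤ M) (hMN : M < N) (hcop : Nat.Coprime N M)
    (hodd : Odd (N + M)) (α : ℂ)
    (u : ℤ → ℂ) (hu : ∀ m : ℤ, u m ≠ 0)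
    (v : ℤ → ℂ) (hv : ∀ m : ℤ, v m = ∏ i ∈ Finset.range M, u (m + i)) :
    (∀ m : ℤ, v (m + N + M) - v m = α * (1 / v (m + N) - 1 / v (m + M))) ↔
    (∃ β : ℤ → ℂ, (∀ m : ℤ, β (m + M) = β m) ∧
      ∀ m : ℤ, ∏ i ∈ Finset.range (N + M), u (m + i) =
        β m - α * ∏ i ∈ Finset.range (N - M), u (m + M + i)) := by
  have hMN' : M ≤ N := le_of_lt hMN
  have hsplit : ∀ (c : ℤ) (a b : ℕ), ∏ i ∈ Finset.range (a + b), u (c + i) =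
      (∏ i ∈ Finset.range a, u (c + i)) * ∏ i ∈ Finset.range b, u (c + a + i) := by
    intro c a b
    rw [Finset.prod_range_add]
    congr 1
    exact Finset.prod_congr rfl fun i _ => by congr 1; push_cast; ring
  set P : ℤ → ℂ := fun m => ∏ i ∈ Finset.range (N + M), u (m + i) with hP
  set Q : ℤ → ℂ := fun m => ∏ i ∈ Finset.range (N - M), u (m + M + i) with hQ
  set R : ℤ → ℂ := fun m => ∏ i ∈ Finset.range N, u (m + M + i) with hR
  have hvne : ∀ m : ℤ, v m ≠ 0 := by
    intro m; rw [hv]; exact Finset.prod_ne_zero_iff.mpr fun i _ => hu _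
  have hRne : ∀ m : ℤ, R m ≠ 0 := by
    intro m; exact Finset.prod_ne_zero_iff.mpr fun i _ => hu _
  have hA : ∀ m : ℤ, P m = v m * R m := by
    intro m
    simp only [hP, hR, hv]
    rw [← hsplit m M N, Nat.add_comm M N]
  have hB : ∀ m : ℤ, P (m + M) = R m * v (m + N + M) := by
    intro m
    simp only [hP, hR, hv]
    rw [hsplit (m + M) N M]
    congr 1
    exact Finset.prod_congr rfl fun i _ => by congr 1; ring
  have hC : ∀ m : ℤ, R m = Q m * v (m + N) := by
    intro m
    simp only [hQ, hR, hv]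
    have h := hsplit (m + M) (N - M) M
    rw [Nat.sub_add_cancel hMN'] at h
    rw [h]
    congr 1
    exact Finset.prod_congr rfl fun i _ => by
      congr 1; push_cast [Nat.cast_sub hMN']; ring
  have hD : ∀ m : ℤ, R m = v (m + M) * Q (m + M) := by
    intro m
    simp only [hQ, hR, hv]
    have h := hsplit (m + M) M (N - M)
    rw [Nat.add_sub_cancel' hMN'] at h
    rw [h]
  have key : ∀ m : ℤ,
      (v (m + N + M) - v m = α * (1 / v (m + N) - 1 / v (m + M))) ↔
      (P (m + M) + α * Q (m + M) = P m + α * Q m) := by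
    intro m
    have h1 : Q (m + M) = R m / v (m + M) := by
      rw [eq_div_iff (hvne _)]; rw [hD m]; ring
    have h2 : Q m = R m / v (m + N) := by
      rw [eq_div_iff (hvne _)]; exact (hC m).symm
    rw [hB m, hA m, h1, h2]
    have e1 : R m * v (m + N + M) + α * (R m / v (m + M))
        = R m * (v (m + N + M) + α / v (m + M)) := by ring
    have e2 : v m * R m + α * (R m / v (m + N))
        = R m * (v m + α / v (m + N)) := by ring
    rw [e1, e2, mul_right_inj' (hRne m)]
    constructor <;> intro h <;> linear_combination h
  constructor
  · intro hk
    refine ⟨fun m => P m + α * Q m, fun m => (key m).mp (hk m), fun m => by simp only [hP, hQ]; ring⟩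
  · rintro ⟨β, hβper, hβeq⟩
    intro m
    apply (key m).mpr
    have e : ∀ k : ℤ, P k + α * Q k = β k := fun k => by
      have := hβeq k; simp only [hP, hQ] at this ⊢; linear_combination this
    rw [e, e, hβper]
end

section
/- Let N > M ≥ 1 be coprime integers with N + M odd, α ∈ ℂ, and let u' : ℤ → ℂ satisfy u'_m ≠ 0 for all m. Define v_m = u'_m u'_{m+1} ⋯ u'_{m+N−1}. Then v satisfies the (N,M) travelling-wave reduction of the lattice KdV equation, v_{m+N+M} − v_m = α(1/v_{m+N} − 1/v_{m+M}) for all m ∈ ℤ, if and only if there exists β' : ℤ → ℂ with β'_{m+N} = β'_m for all m such that u' satisfies u'_m u'_{m+1} ⋯ u'_{m+N+M−1} = β'_m + α/(u'_{m+M} u'_{m+M+1} ⋯ u'_{m+N−1}) for all m ∈ ℤ. -/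
/-- For coprime `N > M ≥ 1` with `N + M` odd and a nowhere-vanishing
`u' : ℤ → ℂ`, the sequence `v_m = u'_m u'_{m+1} ⋯ u'_{m+N−1}` satisfies the `(N,M)`
travelling-wave reduction of the lattice KdV equation iff there is an `N`-periodic
sequence `β'` such that
`u'_m u'_{m+1} ⋯ u'_{m+N+M−1} = β'_m + α/(u'_{m+M} ⋯ u'_{m+N−1})` for all `m`. -/
theorem kdvReduction_iff_uSystem_second
    (N M : ℕ) (hM : 1 ≤ M) (hMN : M < N) (hcop : Nat.Coprime N M)
    (hodd : Odd (N + M)) (α : ℂ)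
    (u' : ℤ → ℂ) (hu' : ∀ m : ℤ, u' m ≠ 0)
    (v : ℤ → ℂ) (hv : ∀ m : ℤ, v m = ∏ i ∈ Finset.range N, u' (m + i)) :
    (∀ m : ℤ, v (m + N + M) - v m = α * (1 / v (m + N) - 1 / v (m + M))) ↔
    (∃ β' : ℤ → ℂ, (∀ m : ℤ, β' (m + N) = β' m) ∧
      ∀ m : ℤ, ∏ i ∈ Finset.range (N + M), u' (m + i) =
        β' m + α / ∏ i ∈ Finset.range (N - M), u' (m + M + i)) := by
  set Q : ℤ → ℂ := fun m => ∏ i ∈ Finset.range (N - M), u' (m + M + i) with hQ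
  set T : ℤ → ℂ := fun m => ∏ i ∈ Finset.range M, u' (m + N + i) with hT
  set P : ℤ → ℂ := fun m => ∏ i ∈ Finset.range (N + M), u' (m + i) with hP
  have hvne : ∀ m : ℤ, v m ≠ 0 := fun m => by
    rw [hv]; exact Finset.prod_ne_zero_iff.mpr fun i _ => hu' _
  have hQne : ∀ m : ℤ, Q m ≠ 0 := fun m =>
    Finset.prod_ne_zero_iff.mpr fun i _ => hu' _
  have hTne : ∀ m : ℤ, T m ≠ 0 := fun m =>
    Finset.prod_ne_zero_iff.mpr fun i _ => hu' _
  have hcast : ((N - M : ℕ) : ℤ) = (N : ℤ) - M := by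
    exact_mod_cast Nat.cast_sub hMN.le
  -- P m = v m * T m
  have hP1 : ∀ m : ℤ, P m = v m * T m := by
    intro m
    rw [hP, hv, hT]
    simp only [Finset.prod_range_add]
    congr 1
    refine Finset.prod_congr rfl fun i _ => ?_
    congr 1; push_cast; ring
  -- P (m+N) = T m * v (m+N+M)
  have hP2 : ∀ m : ℤ, P (m + N) = T m * v (m + N + M) := by
    intro m
    rw [hP, hv, hT]
    simp only [add_comm N M, Finset.prod_range_add]
    congr 1
    refine Finset.prod_congr rfl fun i _ => ?_
    congr 1; push_cast; ring
  -- v (m+M) = Q m * T m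
  have hvM : ∀ m : ℤ, v (m + M) = Q m * T m := by
    intro m
    have h := Finset.prod_range_add (fun i : ℕ => u' (m + M + i)) (N - M) M
    rw [Nat.sub_add_cancel hMN.le] at h
    rw [hv, h]
    congr 1
    refine Finset.prod_congr rfl fun i _ => ?_
    congr 1; push_cast [Nat.cast_sub hMN.le]; ring
  -- v (m+N) = T m * Q (m+N)
  have hvN : ∀ m : ℤ, v (m + N) = T m * Q (m + N) := by
    intro m
    have h := Finset.prod_range_add (fun i : ℕ => u' (m + N + i)) M (N - M)
    rw [Nat.add_sub_cancel' hMN.le] at h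
    rw [hv, h]
    congr 1
    refine Finset.prod_congr rfl fun i _ => ?_
    congr 1; push_cast; ring
  have hA : ∀ m : ℤ, α / Q m = α * T m / v (m + M) := by
    intro m
    rw [hvM m]
    field_simp [hQne, hTne]
  have hB : ∀ m : ℤ, α / Q (m + N) = α * T m / v (m + N) := by
    intro m
    rw [hvN m]
    field_simp [hQne, hTne]
  have key : ∀ m : ℤ,
      (P (m + N) - α / Q (m + N)) - (P m - α / Q m) =
        T m * ((v (m + N + M) - v m) - α * (1 / v (m + N) - 1 / v (m + M))) := by
    intro m
    rw [hP1 m, hP2 m, hA m, hB m]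
    field_simp [hvne, hTne]
    ring
  constructor
  · intro h
    refine ⟨fun m => P m - α / Q m, fun m => ?_, fun m => ?_⟩
    · have hk := key m
      rw [h m] at hk
      simp only [sub_self, mul_zero] at hk
      exact sub_eq_zero.mp hk
    · ring
  · rintro ⟨β', hper, heq⟩ m
    have hβ : ∀ k : ℤ, β' k = P k - α / Q k := fun k =>
      eq_sub_of_add_eq (heq k).symm
    have hk := key m
    rw [← hβ m, ← hβ (m + N), hper m, sub_self] at hk
    have h0 := (mul_eq_zero.mp hk.symm).resolve_left (hTne m)
    have h1 := sub_eq_zero.mp h0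
    exact h1
end

section
/- Let N > M ≥ 1 be coprime integers with N + M odd. Let c : ℤ → ℂ satisfy c_{−m} = −c_m for all m ∈ ℤ, together with: c_m = −c_{N+M−m} for all 0 < m < N+M; c_m = −c_{m−M} for all M < m < N+M; and c_m = −c_{m−N} for all N < m < N+M. Then for every k with 1 ≤ k ≤ N+M−1 one has c_k = (−1)^{h_k} · (−c_M), where h_k is the unique integer with 0 ≤ h_k ≤ N+M−1 and M·h_k ≡ k (mod N+M). -/
/-- Let `N > M ≥ 1` be coprime with `N + M` odd, and let `c : ℤ → ℂ`
satisfy `c_{−m} = −c_m`, together with `c_m = −c_{N+M−m}` for `0 < m < N+M`,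
`c_m = −c_{m−M}` for `M < m < N+M`, and `c_m = −c_{m−N}` for `N < m < N+M`.
Then for every `1 ≤ k ≤ N+M−1`, `c_k = (−1)^{h_k} ⬝ (−c_M)`, where `h_k` is the unique
integer with `0 ≤ h_k ≤ N+M−1` and `M·h_k ≡ k (mod N+M)`. -/
theorem coefficient_determination
    (N M : ℕ) (hM : 1 ≤ M) (hMN : M < N) (hcop : Nat.Coprime N M)
    (hodd : Odd (N + M)) (c : ℤ → ℂ)
    (hneg : ∀ m : ℤ, c (-m) = -c m)
    (h1 : ∀ m : ℤ, 0 < m → m < N + M → c m = -c (N + M - m))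
    (h2 : ∀ m : ℤ, (M : ℤ) < m → m < N + M → c m = -c (m - M))
    (h3 : ∀ m : ℤ, (N : ℤ) < m → m < N + M → c m = -c (m - N)) :
    ∀ k : ℕ, 1 ≤ k → k ≤ N + M - 1 →
      ∀ h : ℕ, h ≤ N + M - 1 → (M * h) % (N + M) = k % (N + M) →
        c k = (-1 : ℂ) ^ h * (-(c M)) := by
  intro k hk1 hk2 h hhle hmod
  set P := N + M with hP
  have hPpos : 0 < P := by omega
  have hcopP : Nat.Coprime P M := by
    exact Nat.coprime_add_self_left.mpr hcop
  have hnz : ∀ t : ℕ, 1 ≤ t → t < P → (M * t) % P ≠ 0 := by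
    intro t ht1 ht2 hz
    have hdvd : P ∣ M * t := Nat.dvd_of_mod_eq_zero hz
    have hdt : P ∣ t := hcopP.dvd_of_dvd_mul_left hdvd
    have := Nat.le_of_dvd (by omega) hdt
    omega
  have key : ∀ r : ℕ, 1 ≤ r → r < P → (r + M) % P ≠ 0 →
      c (((r + M) % P : ℕ) : ℤ) = - c (r : ℤ) := by
    intro r hr1 hr2 hne
    by_cases hcase : r + M < P
    · rw [Nat.mod_eq_of_lt hcase]
      have h2' := h2 ((r : ℤ) + M) (by push_cast; omega) (by push_cast [hP]; omega)
      push_cast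
      simpa using h2'
    · have hge : P ≤ r + M := by omega
      have hmodeq : (r + M) % P = r - N := by
        rw [Nat.mod_eq_sub_mod hge, Nat.mod_eq_of_lt (by omega)]
        omega
      have hrN : N < r := by
        rcases Nat.lt_or_ge N r with hh | hh
        · exact hh
        · exfalso; apply hne; rw [hmodeq]; omega
      have h3' := h3 (r : ℤ) (by push_cast; omega) (by push_cast [hP]; omega)
      rw [hmodeq]
      rw [h3']
      congr 1
      push_cast [Nat.cast_sub hrN.le]
      ring
  have main : ∀ t : ℕ, 1 ≤ t → t ≤ P - 1 →
      c (((M * t) % P : ℕ) : ℤ) = (-1 : ℂ) ^ t * (-(c (M : ℤ))) := by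
    intro t
    induction t with
    | zero => omega
    | succ n ih =>
      intro _ hle'
      rcases Nat.eq_zero_or_pos n with hn0 | hn1
      · subst hn0
        rw [show M * 1 % P = M by rw [Nat.mul_one, Nat.mod_eq_of_lt (by omega)]]
        simp
      · have ihv := ih hn1 (by omega)
        set r := (M * n) % P with hr
        have hrpos : 1 ≤ r := Nat.pos_of_ne_zero (hnz n hn1 (by omega))
        have hrlt : r < P := Nat.mod_lt _ hPpos
        have e : (M * (n + 1)) % P = (r + M) % P := by
          rw [Nat.mul_succ, Nat.add_mod, ← hr, Nat.mod_eq_of_lt (show M < P by omega)]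
        have hne : (r + M) % P ≠ 0 := by
          rw [← e]; exact hnz (n + 1) (by omega) (by omega)
        rw [e, key r hrpos hrlt hne, ihv]
        ring
  have hk' : k % P = k := Nat.mod_eq_of_lt (by omega)
  have hh1 : 1 ≤ h := by
    by_contra hcon
    have : h = 0 := by omega
    subst this
    simp [hk'] at hmod
    omega
  have := main h hh1 hhle
  rw [hmod, hk'] at this
  exact this
end

section
/- Let N > M > 1 be coprime integers with N + M odd and let α ∈ ℂ. Define the birational map φ̃ on the open set {g ∈ ℂ^{N+M} : g_N ≠ 0} by φ̃(g_0, g_1, …, g_{N+M−1}) = (g_1, g_2, …, g_{N−M−1}, g_{N−M} − α/g_N, g_{N−M+1}, …, g_{N+M−1}, g_0 + α/g_N), and let π be the constant skew-symmetric (N+M)×(N+M) matrix with entries, for 0 ≤ i < j ≤ N+M−1: π_{ij} = −α if j−i = M, π_{ij} = α if j−i = N, and π_{ij} = 0 otherwise, with π_{ji} = −π_{ij}. Then the Jacobian matrix J(g) of φ̃ satisfies J(g) π J(g)ᵀ = π for every g with g_N ≠ 0; that is, φ̃ preserves the constant Poisson bracket {g_i, g_j} = π_{ij}. -/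
open Matrix

/-- Partial derivative `∂f/∂g_l` at the point `g`. -/
noncomputable def pd {n : ℕ} (f : (Fin n → ℂ) → ℂ) (v : Fin n → ℂ) (l : Fin n) : ℂ :=
  fderiv ℂ f v (Pi.single l 1)

/-- The Jacobian matrix of a map `f : ℂ^n → ℂ^n` at the point `v`. -/
noncomputable def jacMat {n : ℕ} (f : (Fin n → ℂ) → Fin n → ℂ) (v : Fin n → ℂ) :
    Matrix (Fin n) (Fin n) ℂ :=
  Matrix.of fun i j => pd (fun w => f w i) v j

/-- The map `φ̃(g_0,…,g_{N+M−1}) = (g_1,…,g_{N−M−1}, g_{N−M} − α/g_N, g_{N−M+1},…,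
g_{N+M−1}, g_0 + α/g_N)`: component `i` is `g_{i+1}` (cyclically, so component `N+M−1`
starts from `g_0`), corrected by `−α/g_N` at position `N−M−1` and `+α/g_N` at position
`N+M−1`. -/
noncomputable def phiTilde (α : ℂ) (N M : ℕ) (hN : N < N + M) (g : Fin (N + M) → ℂ) :
    Fin (N + M) → ℂ := fun i =>
  (if h : (i : ℕ) + 1 < N + M then g ⟨(i : ℕ) + 1, h⟩
    else g ⟨0, Nat.lt_of_le_of_lt (Nat.zero_le N) hN⟩) +
  (if (i : ℕ) = N - M - 1 then -α / g ⟨N, hN⟩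
    else if (i : ℕ) = N + M - 1 then α / g ⟨N, hN⟩ else 0)

/-- The constant skew-symmetric matrix `π` with `π_{ij} = −α` if `j − i = M`, `π_{ij} = α`
if `j − i = N` (for `i < j`), and `0` otherwise. -/
def piMat (α : ℂ) (N M n : ℕ) : Matrix (Fin n) (Fin n) ℂ :=
  Matrix.of fun i j =>
    if (i : ℕ) < (j : ℕ) then
      (if (j : ℕ) - (i : ℕ) = M then -α else if (j : ℕ) - (i : ℕ) = N then α else 0)
    else if (j : ℕ) < (i : ℕ) then
      -(if (i : ℕ) - (j : ℕ) = M then -α else if (i : ℕ) - (j : ℕ) = N then α else 0)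
    else 0

/- ===== auxiliary ===== -/

def sigF (N M : ℕ) (hN : N < N + M) (i : Fin (N + M)) : Fin (N + M) :=
  if h : (i : ℕ) + 1 < N + M then ⟨(i : ℕ) + 1, h⟩ else ⟨0, by omega⟩

noncomputable def kapF (α : ℂ) (N M : ℕ) (i : Fin (N + M)) : ℂ :=
  if (i : ℕ) = N - M - 1 then -α else if (i : ℕ) = N + M - 1 then α else 0

noncomputable def projC (n : ℕ) (s : Fin n) : (Fin n → ℂ) →L[ℂ] ℂ :=
  ContinuousLinearMap.proj s

lemma phi_eq (α : ℂ) (N M : ℕ) (hN : N < N + M) (g : Fin (N + M) → ℂ) (i : Fin (N + M)) :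
    phiTilde α N M hN g i = g (sigF N M hN i) + kapF α N M i * (g ⟨N, hN⟩)⁻¹ := by
  simp only [phiTilde, sigF, kapF]
  split_ifs <;> ring

lemma jac_eq (α : ℂ) (N M : ℕ) (hN : N < N + M) (g : Fin (N + M) → ℂ)
    (hg : g ⟨N, hN⟩ ≠ 0) :
    jacMat (phiTilde α N M hN) g = Matrix.of fun i l =>
      (if sigF N M hN i = l then (1 : ℂ) else 0) +
        (-(g ⟨N, hN⟩ ^ 2)⁻¹) * kapF α N M i *
          (if (⟨N, hN⟩ : Fin (N + M)) = l then (1 : ℂ) else 0) := by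
  ext i l
  have hD : HasFDerivAt (fun w : Fin (N + M) → ℂ => phiTilde α N M hN w i)
      (projC (N + M) (sigF N M hN i) +
        kapF α N M i • ((-(g ⟨N, hN⟩ ^ 2)⁻¹) • projC (N + M) ⟨N, hN⟩)) g := by
    have h1 : HasFDerivAt (fun w : Fin (N + M) → ℂ => w (sigF N M hN i))
        (projC (N + M) (sigF N M hN i)) g := (projC _ _).hasFDerivAt
    have h2 : HasDerivAt (fun y : ℂ => y⁻¹) (-(g ⟨N, hN⟩ ^ 2)⁻¹) (g ⟨N, hN⟩) :=
      hasDerivAt_inv hg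
    have h3 := h2.comp_hasFDerivAt g ((projC (N + M) ⟨N, hN⟩).hasFDerivAt)
    have h4 := h1.add (h3.const_mul (kapF α N M i))
    refine h4.congr_of_eventuallyEq ?_
    filter_upwards with w
    rw [phi_eq]
    simp [projC, Function.comp]
  simp only [jacMat, Matrix.of_apply, pd, hD.fderiv]
  simp only [ContinuousLinearMap.add_apply, ContinuousLinearMap.smul_apply, projC,
    ContinuousLinearMap.proj_apply, smul_eq_mul, Pi.single_apply]
  ring

set_option maxHeartbeats 2000000 in
lemma piMat_circ (α : ℂ) (N M : ℕ) (hM : 0 < M) (hMN : M < N) (hN : N < N + M)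
    (i j : Fin (N + M)) :
    piMat α N M (N + M) (sigF N M hN i) (sigF N M hN j) = piMat α N M (N + M) i j := by
  obtain ⟨i, hi⟩ := i
  obtain ⟨j, hj⟩ := j
  by_cases h1 : i + 1 < N + M <;> by_cases h2 : j + 1 < N + M <;>
    simp only [sigF, h1, h2, dif_pos, dif_neg, not_true, not_false_iff, dite_true, dite_false] <;>
    simp only [piMat, Matrix.of_apply] <;>
    split_ifs <;> first | rfl | omega | (exfalso; omega) | rw [neg_neg] | rw [neg_zero] | rw [neg_neg, neg_zero] | norm_num

set_option maxHeartbeats 1000000 in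
lemma piMat_sig_N (α : ℂ) (N M : ℕ) (hM : 0 < M) (hMN : M < N) (hN : N < N + M)
    (i : Fin (N + M)) :
    piMat α N M (N + M) (sigF N M hN i) ⟨N, hN⟩ = kapF α N M i := by
  obtain ⟨i, hi⟩ := i
  by_cases h1 : i + 1 < N + M <;>
    simp only [sigF, h1, dif_pos, dif_neg, not_true, not_false_iff, dite_true, dite_false] <;>
    simp only [piMat, kapF, Matrix.of_apply] <;>
    split_ifs <;> first | rfl | omega | (exfalso; omega) | rw [neg_neg] | rw [neg_zero] | rw [neg_neg, neg_zero] | norm_num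

lemma piMat_skew (α : ℂ) (N M n : ℕ) (i j : Fin n) :
    piMat α N M n j i = -piMat α N M n i j := by
  simp only [piMat, Matrix.of_apply]
  split_ifs <;> first | rfl | omega | (exfalso; omega) | rw [neg_neg] | ring

lemma piMat_diag (α : ℂ) (N M n : ℕ) (i : Fin n) : piMat α N M n i i = 0 := by
  simp [piMat]

lemma matB (α : ℂ) (N M : ℕ) (hM : 0 < M) (hMN : M < N) (hN : N < N + M) (c : ℂ) :
    (Matrix.of fun i l =>
        (if sigF N M hN i = l then (1 : ℂ) else 0) +
          c * kapF α N M i * (if (⟨N, hN⟩ : Fin (N + M)) = l then (1 : ℂ) else 0)) *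
        piMat α N M (N + M) *
        (Matrix.of fun i l =>
          (if sigF N M hN i = l then (1 : ℂ) else 0) +
            c * kapF α N M i * (if (⟨N, hN⟩ : Fin (N + M)) = l then (1 : ℂ) else 0))ᵀ =
      piMat α N M (N + M) := by
  have key : ∀ (v : Fin (N + M) → ℂ) (i : Fin (N + M)),
      (∑ k, ((if sigF N M hN i = k then (1 : ℂ) else 0) +
          c * kapF α N M i * (if (⟨N, hN⟩ : Fin (N + M)) = k then (1 : ℂ) else 0)) * v k)
        = v (sigF N M hN i) + c * kapF α N M i * v ⟨N, hN⟩ := by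
    intro v i
    have h : ∀ k, ((if sigF N M hN i = k then (1 : ℂ) else 0) +
          c * kapF α N M i * (if (⟨N, hN⟩ : Fin (N + M)) = k then (1 : ℂ) else 0)) * v k
        = (if sigF N M hN i = k then v k else 0) +
          (if (⟨N, hN⟩ : Fin (N + M)) = k then c * kapF α N M i * v k else 0) := by
      intro k; split_ifs <;> ring
    simp only [h, Finset.sum_add_distrib, Finset.sum_ite_eq, Finset.mem_univ, if_true]
  ext i j
  simp only [Matrix.mul_apply, Matrix.transpose_apply, Matrix.of_apply]
  have inner : ∀ l, (∑ k, ((if sigF N M hN i = k then (1 : ℂ) else 0) +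
      c * kapF α N M i * (if (⟨N, hN⟩ : Fin (N + M)) = k then (1 : ℂ) else 0)) *
        piMat α N M (N + M) k l)
      = piMat α N M (N + M) (sigF N M hN i) l +
        c * kapF α N M i * piMat α N M (N + M) ⟨N, hN⟩ l := fun l =>
    key (fun k => piMat α N M (N + M) k l) i
  simp only [inner]
  have outer := key (fun l => piMat α N M (N + M) (sigF N M hN i) l +
      c * kapF α N M i * piMat α N M (N + M) ⟨N, hN⟩ l) j
  rw [show (∑ l, (piMat α N M (N + M) (sigF N M hN i) l +
        c * kapF α N M i * piMat α N M (N + M) ⟨N, hN⟩ l) *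
        ((if sigF N M hN j = l then (1 : ℂ) else 0) +
          c * kapF α N M j * (if (⟨N, hN⟩ : Fin (N + M)) = l then (1 : ℂ) else 0)))
      = ∑ l, ((if sigF N M hN j = l then (1 : ℂ) else 0) +
          c * kapF α N M j * (if (⟨N, hN⟩ : Fin (N + M)) = l then (1 : ℂ) else 0)) *
          (piMat α N M (N + M) (sigF N M hN i) l +
            c * kapF α N M i * piMat α N M (N + M) ⟨N, hN⟩ l)
      from Finset.sum_congr rfl fun l _ => by ring]
  rw [key]
  have e1 := piMat_circ α N M hM hMN hN i j
  have e2 := piMat_sig_N α N M hM hMN hN i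
  have e3 := piMat_sig_N α N M hM hMN hN j
  have e4 : piMat α N M (N + M) ⟨N, hN⟩ (sigF N M hN j) =
      -piMat α N M (N + M) (sigF N M hN j) ⟨N, hN⟩ := piMat_skew ..
  have e5 := piMat_diag α N M (N + M) (⟨N, hN⟩ : Fin (N + M))
  rw [e1, e4, e3, e2, e5]
  ring

/-- For coprime `N > M > 1` with `N + M` odd, the map `φ̃` preserves
the constant Poisson bracket `{g_i, g_j} = π_{ij}`: its Jacobian `J(g)` satisfies
`J(g) π J(g)ᵀ = π` at every point with `g_N ≠ 0`. -/
theorem phiTilde_preserves_constant_bracket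
    (N M : ℕ) (hM : 1 < M) (hMN : M < N) (hcop : Nat.Coprime N M)
    (hodd : Odd (N + M)) (α : ℂ) :
    ∀ g : Fin (N + M) → ℂ, g ⟨N, by omega⟩ ≠ 0 →
      jacMat (phiTilde α N M (by omega)) g * piMat α N M (N + M) *
          (jacMat (phiTilde α N M (by omega)) g)ᵀ =
        piMat α N M (N + M) := by
  intro g hg
  rw [jac_eq α N M (by omega) g hg]
  exact matB α N M (by omega) hMN (by omega) (-(g ⟨N, by omega⟩ ^ 2)⁻¹)
end

section
/- Let N > M ≥ 1 be coprime integers with N and M both odd, let α ∈ ℂ, and let v : ℤ → ℂ satisfy v_m ≠ 0 for all m. Define w_m = v_m v_{m+1}. Then v satisfies the (N,M) travelling-wave reduction of the lattice KdV equation, v_{m+N+M} − v_m = α(1/v_{m+N} − 1/v_{m+M}) for all m ∈ ℤ, if and only if w satisfies, for all m ∈ ℤ: Π_{i=0}^{(N+M−2)/2} w_{m+2i+1} − Π_{i=0}^{(N+M−2)/2} w_{m+2i} = α ( Π_{i=0}^{(N−3)/2} w_{m+2i+1} · Π_{i=0}^{(M−3)/2} w_{m+2i+N+1} − Π_{i=0}^{(M−3)/2}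 w_{m+2i+1} · Π_{i=0}^{(N−3)/2} w_{m+2i+M+1} ), where a product over an empty index range (as occurs when M = 1) equals 1. -/
noncomputable def Qv (v : ℤ → ℂ) (a : ℤ) (n : ℕ) : ℂ := ∏ j ∈ Finset.range n, v (a + j)

lemma Qv_succ (v : ℤ → ℂ) (a : ℤ) (n : ℕ) : Qv v a (n+1) = Qv v a n * v (a + n) :=
  Finset.prod_range_succ _ _

lemma Qv_succ' (v : ℤ → ℂ) (a : ℤ) (n : ℕ) : Qv v a (n+1) = v a * Qv v (a+1) n := by
  unfold Qv
  rw [Finset.prod_range_succ']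
  rw [mul_comm]
  congr 1
  · simp
  · exact Finset.prod_congr rfl fun i _ => by push_cast; ring_nf

lemma Qv_add (v : ℤ → ℂ) (a : ℤ) (p q : ℕ) : Qv v a (p+q) = Qv v a p * Qv v (a+p) q := by
  unfold Qv
  rw [Finset.prod_range_add]
  congr 1
  exact Finset.prod_congr rfl fun i _ => by push_cast; ring_nf

lemma Qv_ne_zero (v : ℤ → ℂ) (hv0 : ∀ m : ℤ, v m ≠ 0) (a : ℤ) (n : ℕ) : Qv v a n ≠ 0 :=
  Finset.prod_ne_zero_iff.mpr fun i _ => hv0 _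

lemma prod_w (v w : ℤ → ℂ) (hw : ∀ x : ℤ, w x = v x * v (x+1)) (a : ℤ) (k : ℕ) :
    ∏ i ∈ Finset.range k, w (a + 2*i) = Qv v a (2*k) := by
  induction k with
  | zero => simp [Qv]
  | succ n ih =>
    rw [Finset.prod_range_succ, ih, show 2*(n+1) = 2*n+1+1 from rfl, Qv_succ, Qv_succ, hw]
    push_cast
    ring_nf

/-- For coprime `N > M ≥ 1` with `N` and `M` both odd and a
nowhere-vanishing `v : ℤ → ℂ`, setting `w_m = v_m v_{m+1}`, the sequence `v` satisfies the
`(N,M)` travelling-wave reduction of the lattice KdV equation iff `w` satisfies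
`Π_{i=0}^{(N+M−2)/2} w_{m+2i+1} − Π_{i=0}^{(N+M−2)/2} w_{m+2i} =
 α (Π_{i=0}^{(N−3)/2} w_{m+2i+1} · Π_{i=0}^{(M−3)/2} w_{m+2i+N+1}
   − Π_{i=0}^{(M−3)/2} w_{m+2i+1} · Π_{i=0}^{(N−3)/2} w_{m+2i+M+1})`
for all `m` (products over an empty index range, as when `M = 1`, equal `1`). -/
theorem kdvReduction_iff_wSystem
    (N M : ℕ) (hM : 1 ≤ M) (hMN : M < N) (hcop : Nat.Coprime N M)
    (hNodd : Odd N) (hModd : Odd M) (α : ℂ)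
    (v : ℤ → ℂ) (hv0 : ∀ m : ℤ, v m ≠ 0)
    (w : ℤ → ℂ) (hw : ∀ m : ℤ, w m = v m * v (m + 1)) :
    (∀ m : ℤ, v (m + N + M) - v m = α * (1 / v (m + N) - 1 / v (m + M))) ↔
    (∀ m : ℤ,
      (∏ i ∈ Finset.range ((N + M) / 2), w (m + 2 * i + 1)) -
        (∏ i ∈ Finset.range ((N + M) / 2), w (m + 2 * i)) =
      α * ((∏ i ∈ Finset.range ((N - 1) / 2), w (m + 2 * i + 1)) *
             (∏ i ∈ Finset.range ((M - 1) / 2), w (m + 2 * i + N + 1)) -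
           (∏ i ∈ Finset.range ((M - 1) / 2), w (m + 2 * i + 1)) *
             (∏ i ∈ Finset.range ((N - 1) / 2), w (m + 2 * i + M + 1)))) := by
  obtain ⟨n, hn⟩ := hNodd
  obtain ⟨k, hk⟩ := hModd
  subst hn hk
  rw [show (2*n+1 + (2*k+1)) / 2 = n + k + 1 by omega,
      show (2*n+1 - 1) / 2 = n by omega, show (2*k+1 - 1) / 2 = k by omega]
  refine forall_congr' fun m => ?_
  -- rewrite the five products
  have e1 : ∏ i ∈ Finset.range (n+k+1), w (m + 2*i + 1) = Qv v (m+1) (2*(n+k+1)) := by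
    rw [← prod_w v w hw (m+1)]
    exact Finset.prod_congr rfl fun i _ => by congr 1; ring
  have e2 : ∏ i ∈ Finset.range (n+k+1), w (m + 2*i) = Qv v m (2*(n+k+1)) := by
    rw [← prod_w v w hw m]
  have e3 : ∏ i ∈ Finset.range n, w (m + 2*i + 1) = Qv v (m+1) (2*n) := by
    rw [← prod_w v w hw (m+1)]
    exact Finset.prod_congr rfl fun i _ => by congr 1; ring
  have e4 : ∏ i ∈ Finset.range k, w (m + 2*i + (2*n+1 : ℕ) + 1) = Qv v (m+2*n+2) (2*k) := by
    rw [← prod_w v w hw (m+2*n+2)]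
    exact Finset.prod_congr rfl fun i _ => by congr 1; push_cast; ring
  have e5 : ∏ i ∈ Finset.range k, w (m + 2*i + 1) = Qv v (m+1) (2*k) := by
    rw [← prod_w v w hw (m+1)]
    exact Finset.prod_congr rfl fun i _ => by congr 1; ring
  have e6 : ∏ i ∈ Finset.range n, w (m + 2*i + (2*k+1 : ℕ) + 1) = Qv v (m+2*k+2) (2*n) := by
    rw [← prod_w v w hw (m+2*k+2)]
    exact Finset.prod_congr rfl fun i _ => by congr 1; push_cast; ring
  rw [e1, e2, e3, e4, e5, e6]
  set P := Qv v (m+1) (2*n+2*k+1) with hP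
  have hPne : P ≠ 0 := Qv_ne_zero v hv0 _ _
  have hQ1 : Qv v (m+1) (2*(n+k+1)) = P * v (m + (2*n+1 : ℕ) + (2*k+1 : ℕ)) := by
    rw [show 2*(n+k+1) = (2*n+2*k+1)+1 from by ring, Qv_succ]
    congr 1
    push_cast; ring
  have hQ2 : Qv v m (2*(n+k+1)) = v m * P := by
    rw [show 2*(n+k+1) = (2*n+2*k+1)+1 from by ring, Qv_succ']
  have ha : v (m + (2*n+1 : ℕ)) ≠ 0 := hv0 _
  have hb : v (m + (2*k+1 : ℕ)) ≠ 0 := hv0 _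
  have hQ3 : Qv v (m+1) (2*n) * Qv v (m+2*n+2) (2*k) = P / v (m + (2*n+1 : ℕ)) := by
    rw [eq_div_iff ha, hP, show 2*n+2*k+1 = 2*n + (2*k+1) from by ring, Qv_add, Qv_succ']
    push_cast
    ring_nf
  have hQ4 : Qv v (m+1) (2*k) * Qv v (m+2*k+2) (2*n) = P / v (m + (2*k+1 : ℕ)) := by
    rw [eq_div_iff hb, hP, show 2*n+2*k+1 = 2*k + (2*n+1) from by ring, Qv_add, Qv_succ']
    push_cast
    ring_nf
  rw [hQ1, hQ2, hQ3, hQ4]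
  constructor
  · intro hm
    linear_combination P * hm
  · intro hm
    have h2 := mul_left_cancel₀ hPne
      (show P * (v (m + (2*n+1 : ℕ) + (2*k+1 : ℕ)) - v m) =
            P * (α * (1 / v (m + (2*n+1 : ℕ)) - 1 / v (m + (2*k+1 : ℕ)))) from by
        linear_combination hm)
    linear_combination h2
end
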